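/- Let G be a connected graph and let H = {E_1, …, E_k} be a connecting hypergraph of G. Then there exists a connecting transition set T of G of size at most cost(H) = Σ_{E ∈ H} (|E| − 2). -/

import Mathlib

variable {V : Type*}

/-- The transition consisting of the edges `ab` and `bc`, written `abc`. -/
def transitionOf (a b c : V) : Sym2 (Sym2 V) := s(s(a, b), s(b, c))

/-- `t` is a transition of `G`: an unordered pair of two distinct adjacent edges. -/
def SimpleGraph.IsTransition (G : SimpleGraph V) (t : Sym2 (Sym2 V)) : Prop :=
  ∃ a b c, G.Adj a b ∧ G.Adj b c ∧ a ≠ c ∧ t = transitionOf a b c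

/-- A list of vertices (the support of a walk) is `T`-compatible: every pair of
consecutive edges is either a transition of `T` or a backtrack. -/
def TCompatible (T : Set (Sym2 (Sym2 V))) (l : List V) : Prop :=
  ∀ (i : ℕ) (h : i + 2 < l.length),
    l[i]'(by omega) = l[i + 2]'h ∨
    transitionOf (l[i]'(by omega)) (l[i + 1]'(by omega)) (l[i + 2]'h) ∈ T

/-- `G` is `T`-connected: every two vertices are joined by a `T`-compatible walk. -/
def SimpleGraph.TConnected (G : SimpleGraph V) (T : Set (Sym2 (Sym2 V))) : Prop :=
  ∀ u v : V, ∃ p : G.Walk u v, TCompatible T p.support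

/-- `T` is a connecting transition set of `G`. -/
def SimpleGraph.ConnectingTransitionSet (G : SimpleGraph V)
    (T : Finset (Sym2 (Sym2 V))) : Prop :=
  (∀ t ∈ T, G.IsTransition t) ∧ G.TConnected ↑T

/-- `H` is a connecting hypergraph of `G`: every hyperedge has at least two vertices and
induces a connected subgraph, and every pair of distinct non-adjacent vertices is
contained in a common hyperedge. -/
def SimpleGraph.ConnectingHypergraph (G : SimpleGraph V) (H : Finset (Finset V)) : Prop :=
  (∀ E ∈ H, 2 ≤ E.card ∧ (G.induce (E : Set V)).Connected) ∧
  ∀ u v : V, u ≠ v → ¬G.Adj u v → ∃ E ∈ H, u ∈ E ∧ v ∈ E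

/-- The cost of a hypergraph: the sum over hyperedges of (size − 2). -/
def hcost (H : Finset (Finset V)) : ℕ := ∑ E ∈ H, (E.card - 2)

/-- The quantity τ(G): the sum over co-connected components `C` of `G` with `|C| ≥ 2`
of `|C| − 2` if `G[C]` is connected and `|C| − 1` otherwise. -/
noncomputable def tau {V : Type*} [Fintype V] (G : SimpleGraph V) : ℕ := by
  classical
  haveI : Fintype Gᶜ.ConnectedComponent := Fintype.ofFinite _
  exact ∑ C : Gᶜ.ConnectedComponent,
    if 2 ≤ C.supp.ncard then
      (if (G.induce C.supp).Connected then C.supp.ncard - 2 else C.supp.ncard - 1)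
    else 0

/-!
A transition set lets a walk turn from one edge onto the next, and backtracking is always free.
Inside a connected hyperedge `E` with `|E| ≥ 2`, repeatedly delete a vertex whose removal keeps
`G[E]` connected. Going back up, each re-added vertex `x` hangs off a neighbour `y` already
reached along some dart `(a, y)`, and the single transition `ayx` makes the dart `(y, x)`
reachable too. After `|E| - 2` additions to an edge, every vertex of `E` is the head of a dart
reachable from a fixed root dart, and reversing paths of darts joins any two of them by a
compatible walk. The union of these transition sets, over all hyperedges, connects every
non-adjacent pair, and adjacent pairs are joined by a single edge.
-/

open Finset Relation SimpleGraph

lemma transitionOf_comm (a b c : V) : transitionOf c b a = transitionOf a b c := by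
  unfold transitionOf
  rw [Sym2.eq_swap]
  congr 1 <;> exact Sym2.eq_swap

section TCompatible

variable {T T' : Set (Sym2 (Sym2 V))}

lemma tCompatible_of_length_le_two {l : List V} (hl : l.length ≤ 2) : TCompatible T l :=
  fun i hi => absurd hi (by omega)

lemma tCompatible_cons_cons_cons {a b c : V} {l : List V} :
    TCompatible T (a :: b :: c :: l) ↔
      (a = c ∨ transitionOf a b c ∈ T) ∧ TCompatible T (b :: c :: l) := by
  refine ⟨fun h => ⟨h 0 (by simp), fun i hi => h (i + 1) (by simp at hi ⊢; omega)⟩, ?_⟩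
  rintro ⟨hturn, h⟩ (_ | i) hi
  · exact hturn
  · exact h i (by simp at hi ⊢; omega)

lemma TCompatible.of_cons {a : V} {l : List V} (h : TCompatible T (a :: l)) : TCompatible T l :=
  fun i hi => h (i + 1) (by simp; omega)

lemma TCompatible.mono (hT : T ⊆ T') {l : List V} (h : TCompatible T l) : TCompatible T' l :=
  fun i hi => (h i hi).imp_right (@hT _)

end TCompatible

/-- A dart `(a, b)` may be followed by `(b, c)` when the walk `abc` is `T`-compatible. -/
inductive TransitionStep (G : SimpleGraph V) (T : Set (Sym2 (Sym2 V))) : V × V → V × V → Prop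
  | mk {a b c : V} : G.Adj a b → G.Adj b c → (a = c ∨ transitionOf a b c ∈ T) →
      TransitionStep G T (a, b) (b, c)

namespace TransitionStep

variable {G : SimpleGraph V} {T T' : Set (Sym2 (Sym2 V))}

lemma backtrack {a b : V} (h : G.Adj a b) : TransitionStep G T (a, b) (b, a) :=
  mk h h.symm (Or.inl rfl)

lemma swap {d e : V × V} (h : TransitionStep G T d e) : TransitionStep G T e.swap d.swap := by
  obtain ⟨hab, hbc, hturn⟩ := h
  exact mk hbc.symm hab.symm (hturn.imp Eq.symm (by rw [transitionOf_comm]; exact id))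

lemma mono (hT : T ⊆ T') {d e : V × V} (h : TransitionStep G T d e) : TransitionStep G T' d e := by
  obtain ⟨hab, hbc, hturn⟩ := h
  exact mk hab hbc (hturn.imp_right (@hT _))

lemma reflTransGen_mono (hT : T ⊆ T') {d e : V × V}
    (h : ReflTransGen (TransitionStep G T) d e) : ReflTransGen (TransitionStep G T') d e :=
  ReflTransGen.mono (fun _ _ => mono hT) _ _ h

lemma reflTransGen_swap {d e : V × V} (h : ReflTransGen (TransitionStep G T) d e) :
    ReflTransGen (TransitionStep G T) e.swap d.swap := by
  induction h with
  | refl => exact .refl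
  | tail _ hstep ih => exact ih.head hstep.swap

/-- Backtracking turns darts around, so the path from `d₀` to `(a, u)` can be walked in reverse. -/
lemma reflTransGen_of_root {d₀ : V × V} (h₀ : G.Adj d₀.1 d₀.2) {a u b v : V} (hau : G.Adj a u)
    (hu : ReflTransGen (TransitionStep G T) d₀ (a, u))
    (hv : ReflTransGen (TransitionStep G T) d₀ (b, v)) :
    ReflTransGen (TransitionStep G T) (a, u) (b, v) :=
  (reflTransGen_swap hu).head (backtrack hau) |>.trans <| hv.head (backtrack h₀.symm)

lemma exists_walk_of_reflTransGen {d e : V × V} (h : ReflTransGen (TransitionStep G T) d e) :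
    ∃ p : G.Walk d.2 e.2, TCompatible T (d.1 :: p.support) := by
  induction h using ReflTransGen.head_induction_on with
  | refl => exact ⟨.nil, tCompatible_of_length_le_two (by simp)⟩
  | head hstep _ ih =>
    obtain ⟨p, hp⟩ := ih
    obtain ⟨_, hbc, hturn⟩ := hstep
    refine ⟨.cons hbc p, ?_⟩
    rw [← p.cons_tail_support] at hp
    rw [Walk.support_cons, ← p.cons_tail_support]
    exact tCompatible_cons_cons_cons.2 ⟨hturn, hp⟩

end TransitionStep

def ReachesAll (G : SimpleGraph V) (T : Set (Sym2 (Sym2 V))) (d₀ : V × V) (S : Finset V) :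
    Prop :=
  ∀ v ∈ S, ∃ a ∈ S, G.Adj a v ∧ ReflTransGen (TransitionStep G T) d₀ (a, v)

section Hyperedge

variable {G : SimpleGraph V}

lemma ReachesAll.exists_walk {T : Set (Sym2 (Sym2 V))} {d₀ : V × V} {S : Finset V}
    (h₀ : G.Adj d₀.1 d₀.2) (h : ReachesAll G T d₀ S) {u v : V} (hu : u ∈ S) (hv : v ∈ S) :
    ∃ p : G.Walk u v, TCompatible T p.support := by
  obtain ⟨a, -, hau, hdu⟩ := h u hu
  obtain ⟨b, -, -, hdv⟩ := h v hv
  obtain ⟨p, hp⟩ :=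
    TransitionStep.exists_walk_of_reflTransGen (TransitionStep.reflTransGen_of_root h₀ hau hdu hdv)
  exact ⟨p, hp.of_cons⟩

lemma ReachesAll.exists_insert [DecidableEq V] {T : Set (Sym2 (Sym2 V))} {d₀ : V × V} {S : Finset V}
    (h : ReachesAll G T d₀ S) {x y : V} (hx : x ∉ S) (hy : y ∈ S) (hxy : G.Adj y x) :
    ∃ t, G.IsTransition t ∧ ReachesAll G (insert t T) d₀ (insert x S) := by
  obtain ⟨a, haS, hay, hda⟩ := h y hy
  have hmono : T ⊆ insert (transitionOf a y x) T := Set.subset_insert _ _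
  refine ⟨transitionOf a y x, ⟨a, y, x, hay, hxy, ne_of_mem_of_not_mem haS hx, rfl⟩, ?_⟩
  intro v hv
  rcases Finset.mem_insert.1 hv with rfl | hvS
  · refine ⟨y, mem_insert_of_mem hy, hxy, ?_⟩
    exact (TransitionStep.reflTransGen_mono hmono hda).tail
      (.mk hay hxy (Or.inr (Set.mem_insert _ _)))
  · obtain ⟨b, hbS, hbv, hdb⟩ := h v hvS
    exact ⟨b, mem_insert_of_mem hbS, hbv, TransitionStep.reflTransGen_mono hmono hdb⟩

lemma SimpleGraph.Connected.exists_connected_induce_erase [DecidableEq V] {S : Finset V}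
    (hS : 1 < #S) (hconn : (G.induce (S : Set V)).Connected) :
    ∃ x ∈ S, (G.induce (S.erase x : Set V)).Connected := by
  have : Nontrivial (S : Set V) :=
    Set.nontrivial_coe_sort.2 (nontrivial_coe.2 (one_lt_card_iff_nontrivial.1 hS))
  obtain ⟨⟨x, hx⟩, hconn'⟩ := hconn.exists_connected_induce_compl_singleton_of_finite_nontrivial
  refine ⟨x, hx, hconn'.map ⟨fun w => ⟨w.1.1, ?_⟩, id⟩ ?_⟩
  · have hwx : w.1 ≠ ⟨x, hx⟩ := w.2
    exact mem_coe.2 (mem_erase.2 ⟨fun h => hwx (Subtype.ext h), w.1.2⟩)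
  · rintro ⟨v, hv⟩
    obtain ⟨hvx, hvS⟩ := Finset.mem_erase.1 hv
    exact ⟨⟨⟨v, hvS⟩, by simpa [Subtype.ext_iff] using hvx⟩, rfl⟩

lemma SimpleGraph.Connected.exists_adj_mem {S : Finset V} (hS : 1 < #S)
    (hconn : (G.induce (S : Set V)).Connected) {x : V} (hx : x ∈ S) : ∃ y ∈ S, G.Adj x y := by
  have : Nontrivial (S : Set V) :=
    Set.nontrivial_coe_sort.2 (nontrivial_coe.2 (one_lt_card_iff_nontrivial.1 hS))
  obtain ⟨⟨y, hy⟩, hxy⟩ := hconn.preconnected.exists_adj_of_nontrivial ⟨x, hx⟩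
  exact ⟨y, hy, hxy⟩

lemma exists_reachesAll [DecidableEq V] {S : Finset V} (hS : 2 ≤ #S)
    (hconn : (G.induce (S : Set V)).Connected) :
    ∃ T : Finset (Sym2 (Sym2 V)), #T ≤ #S - 2 ∧ (∀ t ∈ T, G.IsTransition t) ∧
      ∃ d₀ : V × V, G.Adj d₀.1 d₀.2 ∧ ReachesAll G T d₀ S := by
  obtain ⟨n, hn⟩ : ∃ n, #S = n := ⟨_, rfl⟩
  induction n, hn ▸ hS using Nat.le_induction generalizing S with
  | base =>
    obtain ⟨u, v, huv, rfl⟩ := card_eq_two.1 hn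
    obtain ⟨w, hw, huw⟩ := hconn.exists_adj_mem (by omega) (mem_insert_self u {v})
    obtain rfl : w = v := by simpa [huw.ne'] using hw
    refine ⟨∅, by simp, by simp, (u, w), huw, ?_⟩
    intro x hx
    rcases Finset.mem_insert.1 hx with rfl | hx
    · exact ⟨w, by simp, huw.symm, .single (.backtrack huw)⟩
    · obtain rfl := mem_singleton.1 hx
      exact ⟨u, by simp, huw, .refl⟩
  | succ n hn2 ih =>
    obtain ⟨x, hxS, hconn'⟩ := hconn.exists_connected_induce_erase (by omega)
    have hcard : #(S.erase x) = n := by rw [card_erase_of_mem hxS]; omega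
    obtain ⟨T, hTcard, hT, d₀, h₀, hreach⟩ := ih (by omega) hconn' hcard
    obtain ⟨y, hyS, hxy⟩ := hconn.exists_adj_mem (by omega) hxS
    obtain ⟨t, ht, hreach'⟩ :=
      hreach.exists_insert (notMem_erase x S) (mem_erase.2 ⟨hxy.ne', hyS⟩) hxy.symm
    refine ⟨insert t T, ?_, ?_, d₀, h₀, ?_⟩
    · exact (card_insert_le _ _).trans (by omega)
    · intro s hs
      rcases Finset.mem_insert.1 hs with rfl | hs
      exacts [ht, hT s hs]
    · rwa [insert_erase hxS, ← coe_insert] at hreach'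

end Hyperedge

theorem stmt5_general {V : Type*} (G : SimpleGraph V)
    (H : Finset (Finset V)) (hH : G.ConnectingHypergraph H) :
    ∃ T : Finset (Sym2 (Sym2 V)), G.ConnectingTransitionSet T ∧ T.card ≤ hcost H := by
  classical
  choose! T hTcard hT d₀ h₀ hreach using fun E hE => exists_reachesAll (hH.1 E hE).1 (hH.1 E hE).2
  refine ⟨H.biUnion T, ⟨fun t ht => ?_, fun u v => ?_⟩, card_biUnion_le.trans (sum_le_sum hTcard)⟩
  · obtain ⟨E, hE, htE⟩ := mem_biUnion.1 ht
    exact hT E hE t htE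
  by_cases huv : u = v
  · subst huv
    exact ⟨.nil, tCompatible_of_length_le_two (by simp)⟩
  by_cases hadj : G.Adj u v
  · exact ⟨hadj.toWalk, tCompatible_of_length_le_two (by simp)⟩
  obtain ⟨E, hE, huE, hvE⟩ := hH.2 u v huv hadj
  obtain ⟨p, hp⟩ := (hreach E hE).exists_walk (h₀ E hE) huE hvE
  exact ⟨p, hp.mono (coe_subset.2 (subset_biUnion_of_mem T hE))⟩

/-- From a connecting hypergraph `H` of a connected graph `G` one can obtain a
connecting transition set of `G` of size at most `cost(H)`. -/
theorem stmt5 {V : Type*} [Fintype V] [DecidableEq V] (G : SimpleGraph V)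
    (hc : G.Connected) (H : Finset (Finset V)) (hH : G.ConnectingHypergraph H) :
    ∃ T : Finset (Sym2 (Sym2 V)), G.ConnectingTransitionSet T ∧ T.card ≤ hcost H :=
  stmt5_general G H hH
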